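/- arXiv:1909.02593 — 8 statements merged into one kernel-verified Lean document; each statement's English description precedes it below -/
import Mathlib

section
/- If n ≥ 2m and m ≥ 1, then {n} = ({m+1} + t{m-1}) · {n-m} + ε(m) t^m {n-2m}, where ε(m) = +1 if m is odd and ε(m) = -1 if m is even. -/
open MvPolynomial

noncomputable def lucas : ℕ → MvPolynomial (Fin 2) ℤ
  | 0 => 0
  | 1 => 1
  | (n+2) => X 0 * lucas (n+1) + X 1 * lucas n

lemma lucas_add (a b : ℕ) :
    lucas (a + b + 1) = lucas (a + 1) * lucas (b + 1) + X 1 * lucas a * lucas b := by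
  induction a using Nat.twoStepInduction generalizing b with
  | zero => simp [lucas]
  | one =>
    have e : 1 + b + 1 = b + 2 := by ring
    rw [e]
    show X 0 * lucas (b+1) + X 1 * lucas b = lucas 2 * lucas (b+1) + X 1 * lucas 1 * lucas b
    have h2 : lucas 2 = X 0 * lucas 1 + X 1 * lucas 0 := rfl
    simp [h2, lucas]
  | more a ih1 ih2 =>
    have e : a + 2 + b + 1 = (a + b + 1) + 2 := by ring
    rw [e]
    show X 0 * lucas (a+b+1+1) + X 1 * lucas (a+b+1) = _
    have e2 : a + b + 1 + 1 = (a + 1) + b + 1 := by ring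
    rw [e2, ih2 b, ih1 b]
    have h3 : lucas (a+3) = X 0 * lucas (a+2) + X 1 * lucas (a+1) := rfl
    have h2 : lucas (a+2) = X 0 * lucas (a+1) + X 1 * lucas a := rfl
    rw [show a + 2 + 1 = a + 3 from rfl, h3, h2]
    ring

lemma lucas_cat (i j : ℕ) :
    lucas (i + j) * lucas (i + 1) - lucas (i + j + 1) * lucas i
      = (-1) ^ i * X 1 ^ i * lucas j := by
  induction i with
  | zero => simp [lucas]
  | succ i ih =>
    have e : i + 1 + j = i + j + 1 := by ring
    rw [e]
    have h2 : lucas (i+2) = X 0 * lucas (i+1) + X 1 * lucas i := rfl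
    have h2' : lucas (i+j+2) = X 0 * lucas (i+j+1) + X 1 * lucas (i+j) := rfl
    rw [show i + 1 + 1 = i + 2 from rfl, show i + j + 1 + 1 = i + j + 2 from rfl, h2, h2']
    linear_combination (-(X 1 : MvPolynomial (Fin 2) ℤ)) * ih

theorem lucas_reduction (m n : ℕ) (hm : 1 ≤ m) (hn : 2 * m ≤ n) :
    lucas n = (lucas (m + 1) + X 1 * lucas (m - 1)) * lucas (n - m) +
      (if Odd m then (1 : MvPolynomial (Fin 2) ℤ) else -1) * X 1 ^ m * lucas (n - 2 * m) := by
  obtain ⟨i, rfl⟩ : ∃ i, m = i + 1 := ⟨m - 1, by omega⟩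
  obtain ⟨j, hj⟩ : ∃ j, n = 2 * (i + 1) + j := ⟨n - 2 * (i + 1), by omega⟩
  have h1 : n - (i + 1) = i + j + 1 := by omega
  have h2 : n - 2 * (i + 1) = j := by omega
  have h3 : i + 1 - 1 = i := by omega
  rw [h1, h2, h3]
  have hsign : (if Odd (i + 1) then (1 : MvPolynomial (Fin 2) ℤ) else -1) = (-1) ^ i := by
    rcases Nat.even_or_odd i with h | h
    · simp [Nat.odd_add_one, Nat.not_odd_iff_even.2 h, h.neg_one_pow]
    · simp [Nat.odd_add_one, h, h.neg_one_pow]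
  rw [hsign, show lucas n = lucas ((i + 1) + (i + j) + 1) from by rw [hj]; ring_nf, lucas_add]
  have hc := lucas_cat i j
  rw [show i + 1 + 1 = i + 2 from rfl, show i + j + 1 = i + j + 1 from rfl] at *
  linear_combination (X 1 : MvPolynomial (Fin 2) ℤ) * hc
end

section
/- For all n ≥ 0, {2n}_{s,t} = {2}_{s,t} · {n}_{s²+2t, -t²}, i.e., the Lucas polynomial {2n} factors as s times the Lucas polynomial {n} evaluated at the substituted variables s' = s²+2t and t' = -t². -/
open MvPolynomial

theorem lucas_two_mul (n : ℕ) :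
    lucas (2 * n) = lucas 2 *
      MvPolynomial.aeval ![X 0 ^ 2 + 2 * X 1, -(X 1 ^ 2)] (lucas n) := by
  induction n using Nat.twoStepInduction with
  | zero => simp [lucas]
  | one => simp [lucas]
  | more n ih1 ih2 =>
    have h : 2 * (n + 2) = (2 * n + 2) + 2 := by ring
    have h1 : 2 * (n + 1) = 2 * n + 2 := by ring
    rw [h]
    show X 0 * lucas (2*n + 2 + 1) + X 1 * lucas (2*n+2) = _
    show _ = lucas 2 * MvPolynomial.aeval ![X 0 ^ 2 + 2 * X 1, -(X 1 ^ 2)]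
      (X 0 * lucas (n+1) + X 1 * lucas n)
    rw [h1] at ih2
    have e1 : lucas (2*n + 2 + 1) = X 0 * lucas (2*n + 2) + X 1 * lucas (2*n + 1) := rfl
    have e2 : lucas (2*n + 2) = X 0 * lucas (2*n + 1) + X 1 * lucas (2*n) := rfl
    have key : X 0 * lucas (2*n+2+1) + X 1 * lucas (2*n+2)
        = (X 0 ^ 2 + 2 * X 1) * lucas (2*n+2) + (-(X 1 ^ 2)) * lucas (2*n) := by
      linear_combination X 0 * e1 - X 1 * e2
    rw [key, ih1, ih2, map_add, map_mul, map_mul, aeval_X, aeval_X]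
    simp [Matrix.cons_val_zero, Matrix.cons_val_one]
    ring
end

section
/- For every n ≥ 1, there exist polynomials P_d(s,t) ∈ ℤ[s,t] for each divisor d of n (with P_1 = 1) such that {n} = ∏_{d|n} P_d(s,t), where P_d(s,t) is the image of the d-th cyclotomic polynomial Φ_d(q) under the Gamma map. Concretely: P_d(1+q, -q) = Φ_d(q) for all d ≥ 2. -/
/-!
Substituting `s = x + y`, `t = -x y` turns `{n}` into `(xⁿ - yⁿ) / (x - y)`, and the specialisation
`s = 1 + q`, `t = -q` factors through this substitution followed by `x = q`, `y = 1`.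
Homogenising `qⁿ - 1 = ∏_{d ∣ n} Φ_d(q)` gives `xⁿ - yⁿ = ∏_{d ∣ n} Φ_d(x, y)` with
`Φ_1(x, y) = x - y`. Since `xⁿ - yⁿ` and `x - y` are antisymmetric, strong induction on `d` shows that
every `Φ_d(x, y)` with `d ≥ 2` is symmetric, hence by the fundamental theorem of symmetric
polynomials it is the image of some `P_d(s, t)`. The substitution is injective, so the factorisation
of `{n}` follows from that of its image.
-/

open MvPolynomial

namespace MvPolynomial

variable (R : Type*) [CommRing R]

/-- Under `s ↦ x + y`, `t ↦ -x y`, the variables `x`, `y` become the roots of `z² = s z + t`. -/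
noncomputable def rootSubst : MvPolynomial (Fin 2) R →ₐ[R] MvPolynomial (Fin 2) R :=
  aeval ![X 0 + X 1, -(X 0 * X 1)]

noncomputable def negSecond : MvPolynomial (Fin 2) R →ₐ[R] MvPolynomial (Fin 2) R :=
  aeval ![X 0, -X 1]

lemma negSecond_involutive : Function.Involutive (negSecond R) := by
  have : (negSecond R).comp (negSecond R) = AlgHom.id R _ := by
    ext i : 1
    fin_cases i <;> simp [negSecond]
  exact AlgHom.congr_fun this

lemma esymm_fin_two_two : esymm (Fin 2) R 2 = X 0 * X 1 := by
  have : Finset.powersetCard 2 (Finset.univ : Finset (Fin 2)) = {Finset.univ} := by decide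
  simp [esymm, this, Fin.prod_univ_two]

lemma rootSubst_negSecond (p : MvPolynomial (Fin 2) R) :
    rootSubst R (negSecond R p) = (esymmAlgHom (Fin 2) R 2 p).val := by
  rw [esymmAlgHom_apply, ← AlgHom.comp_apply]
  congr 1
  ext i : 1
  fin_cases i <;> simp [rootSubst, negSecond, esymm_fin_two_two]

lemma rootSubst_injective : Function.Injective (rootSubst R) := by
  intro p q h
  rw [← negSecond_involutive R p, ← negSecond_involutive R q, rootSubst_negSecond,
    rootSubst_negSecond] at h
  simpa [negSecond_involutive R _] using
    congrArg (negSecond R) (esymmAlgHom_injective R le_rfl (Subtype.ext h))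

lemma exists_rootSubst_eq_of_isSymmetric {p : MvPolynomial (Fin 2) R} (hp : p.IsSymmetric) :
    ∃ P, rootSubst R P = p := by
  obtain ⟨q, hq⟩ := esymmAlgHom_surjective (n := 2) R le_rfl ⟨p, hp⟩
  exact ⟨negSecond R q, by rw [rootSubst_negSecond, hq]⟩

lemma aeval_rootSubst (p : MvPolynomial (Fin 2) R) :
    aeval ![(Polynomial.X : Polynomial R), 1] (rootSubst R p) =
      aeval ![1 + Polynomial.X, -Polynomial.X] p := by
  rw [← AlgHom.comp_apply]
  congr 1
  ext i : 1
  fin_cases i <;> simp [rootSubst, add_comm]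

lemma isSymmetric_iff_rename_swap {p : MvPolynomial (Fin 2) R} :
    p.IsSymmetric ↔ rename (Equiv.swap 0 1) p = p := by
  refine ⟨fun h => h _, fun h e => ?_⟩
  obtain rfl | rfl : e = 1 ∨ e = Equiv.swap 0 1 := by revert e; decide
  · simp
  · exact h

variable {R}

lemma X_zero_sub_X_one_ne_zero [Nontrivial R] : (X 0 - X 1 : MvPolynomial (Fin 2) R) ≠ 0 :=
  sub_ne_zero.mpr ((X_injective (σ := Fin 2) (R := R)).ne (by decide))

open Polynomial in
lemma prod_homogenize_cyclotomic [Nontrivial R] {n : ℕ} (hn : 0 < n) :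
    ∏ d ∈ n.divisors, (cyclotomic d R).homogenize d.totient = X 0 ^ n - X 1 ^ n := by
  rw [← homogenize_finsetProd fun d _ => (natDegree_cyclotomic d R).le, Nat.sum_totient,
    prod_cyclotomic_eq_X_pow_sub_one hn, homogenize_sub, homogenize_X_pow le_rfl, homogenize_one,
    Nat.sub_self, pow_zero, mul_one]

open Polynomial in
lemma isSymmetric_homogenize_cyclotomic [IsDomain R] {d : ℕ} (hd : 2 ≤ d) :
    ((cyclotomic d R).homogenize d.totient).IsSymmetric := by
  induction d using Nat.strong_induction_on with
  | _ d ih =>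
    set H : ℕ → MvPolynomial (Fin 2) R := fun e => (cyclotomic e R).homogenize e.totient
    set Q := ∏ e ∈ d.properDivisors.erase 1, H e
    have h1 : 1 ∈ d.properDivisors := Nat.one_mem_properDivisors_iff_one_lt.mpr hd
    have hsplit : X 0 ^ d - X 1 ^ d = (X 0 - X 1) * (H d * Q) := by
      rw [← prod_homogenize_cyclotomic (by omega), ← Nat.insert_self_properDivisors (by omega),
        Finset.prod_insert Nat.self_notMem_properDivisors, ← Finset.mul_prod_erase _ _ h1]
      simp only [H, Q, cyclotomic_one, Nat.totient_one, homogenize_sub, homogenize_one,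
        homogenize_X one_ne_zero, Nat.sub_self, pow_zero, pow_one, mul_one]
      ring
    have hQ : rename (Equiv.swap 0 1) Q = Q := by
      rw [map_prod]
      refine Finset.prod_congr rfl fun e he => ?_
      obtain ⟨he1, he⟩ := Finset.mem_erase.mp he
      obtain ⟨hed, hlt⟩ := Nat.mem_properDivisors.mp he
      have : 0 < e := Nat.pos_of_dvd_of_pos hed (by omega)
      exact (isSymmetric_iff_rename_swap R).mp (ih e hlt (by omega))
    have hQ0 : Q ≠ 0 := Finset.prod_ne_zero_iff.mpr fun e _ =>
      (homogenize_eq_zero_iff (natDegree_cyclotomic e R).le).not.mpr (cyclotomic_ne_zero e R)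
    -- `xᵈ - yᵈ` and `x - y` change sign under the swap, while `Q` is fixed
    have hswap := congrArg (rename (Equiv.swap (0 : Fin 2) 1)) hsplit
    simp only [map_sub, map_pow, map_mul, hQ, rename_X, Equiv.swap_apply_left,
      Equiv.swap_apply_right] at hswap
    rw [isSymmetric_iff_rename_swap]
    apply mul_right_cancel₀ (mul_ne_zero X_zero_sub_X_one_ne_zero hQ0)
    linear_combination hswap + hsplit

end MvPolynomial

lemma rootSubst_lucas_mul (n : ℕ) :
    rootSubst ℤ (lucas n) * (X 0 - X 1) = X 0 ^ n - X 1 ^ n := by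
  induction n using lucas.induct with
  | case1 => simp [lucas]
  | case2 => simp [lucas]
  | case3 n h1 h0 =>
    show rootSubst ℤ (lucas (n + 2)) * _ = X 0 ^ (n + 2) - X 1 ^ (n + 2)
    simp only [lucas, map_add, map_mul, rootSubst, aeval_X] at h1 h0 ⊢
    simp only [Matrix.cons_val_zero, Matrix.cons_val_one]
    linear_combination (X 0 + X 1) * h1 - X 0 * X 1 * h0

open Polynomial in
lemma rootSubst_lucas {n : ℕ} (hn : 0 < n) :
    rootSubst ℤ (lucas n) = ∏ d ∈ n.divisors.erase 1, (cyclotomic d ℤ).homogenize d.totient := by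
  apply mul_right_cancel₀ X_zero_sub_X_one_ne_zero
  rw [rootSubst_lucas_mul, ← prod_homogenize_cyclotomic hn,
    ← Finset.mul_prod_erase _ _ (Nat.one_mem_divisors.mpr hn.ne'), mul_comm]
  simp

theorem lucas_atomic_factorization (n : ℕ) (hn : 1 ≤ n) :
    ∃ P : ℕ → MvPolynomial (Fin 2) ℤ,
      P 1 = 1 ∧
      lucas n = ∏ d ∈ n.divisors, P d ∧
      ∀ d ∈ n.divisors, 2 ≤ d →
        MvPolynomial.aeval ![1 + Polynomial.X, -Polynomial.X] (P d) =
          Polynomial.cyclotomic d ℤ := by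
  choose! Q hQ using fun d (hd : 2 ≤ d) =>
    exists_rootSubst_eq_of_isSymmetric ℤ (isSymmetric_homogenize_cyclotomic (R := ℤ) hd)
  have h1 : 1 ∈ n.divisors := Nat.one_mem_divisors.mpr (by omega)
  refine ⟨fun d => if d = 1 then 1 else Q d, if_pos rfl, ?_, fun d _ hd => ?_⟩
  · apply rootSubst_injective ℤ
    rw [rootSubst_lucas hn, map_prod, ← Finset.mul_prod_erase _ _ h1, if_pos rfl, map_one, one_mul]
    refine Finset.prod_congr rfl fun d hd => ?_
    obtain ⟨hd1, hd⟩ := Finset.mem_erase.mp hd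
    rw [if_neg hd1, hQ d (by have := Nat.pos_of_mem_divisors hd; omega)]
  · dsimp only
    rw [if_neg (by omega), ← aeval_rootSubst, hQ d hd,
      Polynomial.aeval_homogenize_X_one _ (Polynomial.natDegree_cyclotomic d ℤ).le]
end

section
/- For every n ≥ 2, the Lucas atom P_n(s,t) has nonnegative integer coefficients. -/
/-!
For `n ≥ 3` the primitive `n`-th roots of unity fall into conjugate pairs `ζ, conj ζ` with
`Im ζ > 0`, so `Φ_n(q) = ∏ (q ^ 2 - 2 Re ζ q + 1)`, and the weight-`φ(n)` polynomial
`∏ (s ^ 2 + (2 + 2 Re ζ) t)` maps to it under `s = 1 + q`, `t = -q`. Its coefficients are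
nonnegative because `|Re ζ| ≤ 1`. It coincides with `P_n`, since the substitution is injective on
weighted-homogeneous polynomials of a fixed weight: the monomial of least `t`-degree survives as
the lowest coefficient in `q`. For `n = 2`, `P_2 = s`.
-/

open MvPolynomial

section NonnegCoeffs

variable (σ R : Type*) [CommSemiring R] [PartialOrder R] [IsOrderedRing R]

def MvPolynomial.nonnegCoeffs : Subsemiring (MvPolynomial σ R) where
  carrier := {p | ∀ m, 0 ≤ p.coeff m}
  mul_mem' {p q} hp hq m := by
    classical
    rw [coeff_mul]
    exact Finset.sum_nonneg fun x _ => mul_nonneg (hp x.1) (hq x.2)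
  one_mem' m := by
    classical
    rw [coeff_one]
    split_ifs <;> simp
  add_mem' hp hq m := add_nonneg (hp m) (hq m)
  zero_mem' _ := le_rfl

variable {σ R}

theorem MvPolynomial.C_mem_nonnegCoeffs {c : R} (hc : 0 ≤ c) : C c ∈ nonnegCoeffs σ R := by
  classical
  intro m
  rw [coeff_C]
  split_ifs <;> simp [hc]

theorem MvPolynomial.X_mem_nonnegCoeffs (i : σ) : X i ∈ nonnegCoeffs σ R := by
  classical
  intro m
  rw [coeff_X]
  split_ifs <;> simp

end NonnegCoeffs

theorem MvPolynomial.IsWeightedHomogeneous.map {σ R S M : Type*} [CommSemiring R]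
    [CommSemiring S] [AddCommMonoid M] {w : σ → M} {F : MvPolynomial σ R} {d : M}
    (hF : F.IsWeightedHomogeneous w d) (f : R →+* S) : (map f F).IsWeightedHomogeneous w d :=
  fun m hm => hF fun h => hm (by rw [coeff_map, h, f.map_zero])

theorem isWeightedHomogeneous_one_two_iff {R : Type*} [CommSemiring R]
    {F : MvPolynomial (Fin 2) R} {d : ℕ} :
    F.IsWeightedHomogeneous ![1, 2] d ↔ ∀ m, F.coeff m ≠ 0 → m 0 + 2 * m 1 = d := by
  simp [IsWeightedHomogeneous, Finsupp.weight_apply, Finsupp.sum_fintype, mul_comm]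

section Substitution

open Polynomial

variable {R : Type*} [CommRing R]

noncomputable def lucasSubst (R : Type*) [CommRing R] : Fin 2 → R[X] :=
  ![1 + Polynomial.X, -Polynomial.X]

@[simp] theorem lucasSubst_zero : lucasSubst R 0 = 1 + Polynomial.X := rfl

@[simp] theorem lucasSubst_one : lucasSubst R 1 = -Polynomial.X := rfl

theorem Polynomial.coeff_one_add_X_pow_mul_neg_X_pow (a b k : ℕ) :
    ((1 + X) ^ a * (-X) ^ b : R[X]).coeff k =
      if b ≤ k then (-1) ^ b * ((1 + X) ^ a : R[X]).coeff (k - b) else 0 := by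
  rw [neg_pow, mul_left_comm, ← C_1, ← C_neg, ← C_pow, coeff_C_mul, coeff_mul_X_pow']
  split_ifs <;> simp

theorem aeval_lucasSubst_eq_sum (F : MvPolynomial (Fin 2) R) :
    aeval (lucasSubst R) F = ∑ m ∈ F.support,
      Polynomial.C (F.coeff m) * ((1 + Polynomial.X) ^ m 0 * (-Polynomial.X) ^ m 1) := by
  rw [MvPolynomial.aeval_def, eval₂_eq']
  simp [Fin.prod_univ_two]

theorem MvPolynomial.IsWeightedHomogeneous.eq_zero_of_aeval_lucasSubst_eq_zero
    {F : MvPolynomial (Fin 2) R} {d : ℕ} (hF : F.IsWeightedHomogeneous ![1, 2] d)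
    (h : aeval (lucasSubst R) F = 0) : F = 0 := by
  by_contra hF0
  obtain ⟨m, hm, hmin⟩ := F.support.exists_min_image (· 1) (support_nonempty.2 hF0)
  -- By weighted homogeneity, `m` is the only monomial of `F` with `t`-degree `m 1`, and the
  -- others only contribute to higher powers of `q`.
  have hlow : (aeval (lucasSubst R) F).coeff (m 1) = F.coeff m * (-1) ^ m 1 := by
    rw [aeval_lucasSubst_eq_sum, finsetSum_coeff, Finset.sum_eq_single_of_mem m hm]
    · simp [Polynomial.coeff_C_mul, Polynomial.coeff_one_add_X_pow_mul_neg_X_pow,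
        coeff_zero_eq_eval_zero]
    intro m' hm' hne
    rw [Polynomial.coeff_C_mul, Polynomial.coeff_one_add_X_pow_mul_neg_X_pow, if_neg, mul_zero]
    refine not_le.2 ((hmin m' hm').lt_of_ne fun h1 => hne ?_)
    have hw := isWeightedHomogeneous_one_two_iff.1 hF
    have h0 : m' 0 = m 0 := by
      have := hw m' (mem_support_iff.1 hm'); have := hw m (mem_support_iff.1 hm); omega
    exact Finsupp.ext (Fin.forall_fin_two.2 ⟨h0, h1.symm⟩)
  rw [h, Polynomial.coeff_zero, eq_comm, (isUnit_neg_one.pow _).mul_left_eq_zero] at hlow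
  exact mem_support_iff.1 hm hlow

theorem aeval_lucasSubst_map {S : Type*} [CommRing S] (f : R →+* S)
    (F : MvPolynomial (Fin 2) R) :
    aeval (lucasSubst S) (map f F) = (aeval (lucasSubst R) F).map f := by
  rw [MvPolynomial.aeval_def, MvPolynomial.aeval_def, MvPolynomial.eval₂_map,
    ← Polynomial.coe_mapRingHom, eval₂_comp_left]
  congr 1
  · ext; simp
  · ext i : 1
    fin_cases i <;> simp

theorem MvPolynomial.IsWeightedHomogeneous.eq_of_aeval_lucasSubst_eq
    {F G : MvPolynomial (Fin 2) R} {d : ℕ} (hF : F.IsWeightedHomogeneous ![1, 2] d)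
    (hG : G.IsWeightedHomogeneous ![1, 2] d)
    (h : aeval (lucasSubst R) F = aeval (lucasSubst R) G) : F = G :=
  sub_eq_zero.1 <| (hF.sub hG).eq_zero_of_aeval_lucasSubst_eq_zero (by rw [map_sub, h, sub_self])

end Substitution

theorem IsPrimitiveRoot.le_two_of_linearOrder {R : Type*} [CommRing R] [LinearOrder R]
    [IsStrictOrderedRing R] {ζ : R} {n : ℕ} (h : IsPrimitiveRoot ζ n) : n ≤ 2 := by
  rcases Nat.eq_zero_or_pos n with rfl | hn
  · exact Nat.zero_le _
  have hsq : ζ ^ 2 = 1 := by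
    rcases (pow_eq_one_iff_of_ne_zero hn.ne').1 h.pow_eq_one with rfl | ⟨rfl, -⟩ <;> norm_num
  exact Nat.le_of_dvd two_pos (h.dvd_of_pow_eq_one 2 hsq)

theorem IsPrimitiveRoot.im_ne_zero {z : ℂ} {n : ℕ} (h : IsPrimitiveRoot z n) (hn : 2 < n) :
    z.im ≠ 0 := by
  intro him
  have hz : z = Complex.ofRealHom z.re := Complex.ext rfl (by simp [him])
  rw [hz] at h
  exact absurd (h.of_map_of_injective Complex.ofReal_injective).le_two_of_linearOrder (by omega)

theorem IsPrimitiveRoot.conj {z : ℂ} {n : ℕ} (h : IsPrimitiveRoot z n) :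
    IsPrimitiveRoot (starRingEnd ℂ z) n :=
  h.map_of_injective (starRingEnd ℂ).injective

section UpperPrimitiveRoots

variable {n : ℕ}

noncomputable def upperPrimitiveRoots (n : ℕ) : Finset ℂ :=
  (primitiveRoots n ℂ).filter (0 < ·.im)

@[to_additive]
theorem prod_primitiveRoots_eq_prod_upperPrimitiveRoots {M : Type*} [CommMonoid M] (hn : 2 < n)
    (f : ℂ → M) :
    ∏ z ∈ primitiveRoots n ℂ, f z =
      ∏ z ∈ upperPrimitiveRoots n, f z * f (starRingEnd ℂ z) := by
  have hn0 : 0 < n := by omega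
  rw [← Finset.prod_filter_mul_prod_filter_not _ (0 < ·.im), Finset.prod_mul_distrib]
  congr 1
  refine Finset.prod_nbij' (starRingEnd ℂ) (starRingEnd ℂ) ?_ ?_ (by simp) (by simp) (by simp)
  all_goals
    intro z hz
    simp only [upperPrimitiveRoots, Finset.mem_filter, mem_primitiveRoots hn0,
      Complex.conj_im] at hz ⊢
    refine ⟨hz.1.conj, ?_⟩
  · exact neg_pos.2 (lt_of_le_of_ne (not_lt.1 hz.2) (hz.1.im_ne_zero hn))
  · exact not_lt.2 (neg_nonpos.2 hz.2.le)

theorem two_mul_card_upperPrimitiveRoots (hn : 2 < n) :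
    2 * (upperPrimitiveRoots n).card = n.totient := by
  have := sum_primitiveRoots_eq_sum_upperPrimitiveRoots hn fun _ => 1
  simp only [Finset.sum_const, smul_eq_mul, mul_one] at this
  rw [(Complex.isPrimitiveRoot_exp n (by omega)).card_primitiveRoots] at this
  omega

end UpperPrimitiveRoots

namespace Polynomial

theorem X_sub_C_mul_X_sub_C_conj (z : ℂ) :
    (X - C z) * (X - C (starRingEnd ℂ z)) =
      (X ^ 2 - C (2 * z.re) * X + C (Complex.normSq z) : ℝ[X]).map Complex.ofRealHom := by
  simp only [Polynomial.map_add, Polynomial.map_sub, Polynomial.map_mul, Polynomial.map_pow,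
    map_X, map_C, Complex.ofRealHom_eq_coe]
  rw [← Complex.add_conj, ← Complex.mul_conj, C_add, C_mul]
  ring

theorem cyclotomic_real_eq_prod_upperPrimitiveRoots {n : ℕ} (hn : 2 < n) :
    cyclotomic n ℝ = ∏ z ∈ upperPrimitiveRoots n, (X ^ 2 - C (2 * z.re) * X + 1) := by
  apply map_injective Complex.ofRealHom Complex.ofReal_injective
  rw [map_cyclotomic, Polynomial.map_prod,
    cyclotomic_eq_prod_X_sub_primitiveRoots (Complex.isPrimitiveRoot_exp n (by omega)),
    prod_primitiveRoots_eq_prod_upperPrimitiveRoots hn]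
  refine Finset.prod_congr rfl fun z hz => ?_
  have hz1 : Complex.normSq z = 1 := by
    rw [upperPrimitiveRoots, Finset.mem_filter, mem_primitiveRoots (by omega)] at hz
    rw [Complex.normSq_eq_norm_sq, hz.1.norm'_eq_one (by omega), one_pow]
  rw [X_sub_C_mul_X_sub_C_conj, hz1, C_1]

end Polynomial

section LucasModel

variable {n : ℕ}

/-- Under `s = 1 + q`, `t = -q` each factor becomes
`q ^ 2 - 2 Re ζ q + 1 = (q - ζ) (q - conj ζ)`. -/
noncomputable def lucasModel (n : ℕ) : MvPolynomial (Fin 2) ℝ :=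
  ∏ z ∈ upperPrimitiveRoots n, (X 0 ^ 2 + C (2 + 2 * z.re) * X 1)

theorem isWeightedHomogeneous_lucasModel (hn : 2 < n) :
    (lucasModel n).IsWeightedHomogeneous ![1, 2] n.totient := by
  rw [← two_mul_card_upperPrimitiveRoots hn, mul_comm, ← smul_eq_mul, ← Finset.sum_const]
  exact IsWeightedHomogeneous.prod _ _ _ fun z _ =>
    ((isWeightedHomogeneous_X ℝ _ 0).pow 2).add ((isWeightedHomogeneous_X ℝ _ 1).C_mul _)

theorem aeval_lucasModel (hn : 2 < n) :
    aeval (lucasSubst ℝ) (lucasModel n) = Polynomial.cyclotomic n ℝ := by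
  rw [Polynomial.cyclotomic_real_eq_prod_upperPrimitiveRoots hn, lucasModel, map_prod]
  refine Finset.prod_congr rfl fun z _ => ?_
  simp only [map_add, map_mul, map_pow, aeval_X, aeval_C, lucasSubst_zero, lucasSubst_one,
    Polynomial.algebraMap_eq, Polynomial.C_ofNat]
  ring

theorem lucasModel_mem_nonnegCoeffs : lucasModel n ∈ nonnegCoeffs (Fin 2) ℝ := by
  refine prod_mem fun z hz => add_mem (pow_mem (X_mem_nonnegCoeffs _) _)
    (mul_mem (C_mem_nonnegCoeffs ?_) (X_mem_nonnegCoeffs _))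
  rcases n.eq_zero_or_pos with rfl | hn
  · simp [upperPrimitiveRoots] at hz
  rw [upperPrimitiveRoots, Finset.mem_filter, mem_primitiveRoots hn] at hz
  have := (abs_le.1 ((Complex.abs_re_le_norm z).trans (hz.1.norm'_eq_one hn.ne').le)).1
  linarith

theorem exists_lucasModel (hn : 2 ≤ n) : ∃ Q : MvPolynomial (Fin 2) ℝ,
    Q.IsWeightedHomogeneous ![1, 2] n.totient ∧
      aeval (lucasSubst ℝ) Q = Polynomial.cyclotomic n ℝ ∧ Q ∈ nonnegCoeffs (Fin 2) ℝ := by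
  rcases hn.eq_or_lt with rfl | hn
  · refine ⟨X 0, isWeightedHomogeneous_X ℝ _ 0, ?_, X_mem_nonnegCoeffs 0⟩
    rw [aeval_X, lucasSubst_zero, Polynomial.cyclotomic_two, add_comm]
  · exact ⟨lucasModel n, isWeightedHomogeneous_lucasModel hn, aeval_lucasModel hn,
      lucasModel_mem_nonnegCoeffs⟩

end LucasModel

theorem lucas_atom_coeff_nonneg (n : ℕ) (hn : 2 ≤ n) (P : MvPolynomial (Fin 2) ℤ)
    (hform : ∀ m : Fin 2 →₀ ℕ, P.coeff m ≠ 0 → m 0 + 2 * m 1 = Nat.totient n)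
    (heval : MvPolynomial.aeval ![1 + Polynomial.X, -Polynomial.X] P =
      Polynomial.cyclotomic n ℤ) :
    ∀ m : Fin 2 →₀ ℕ, 0 ≤ P.coeff m := by
  obtain ⟨Q, hQw, hQe, hQ⟩ := exists_lucasModel hn
  have hPQ : map (Int.castRingHom ℝ) P = Q :=
    ((isWeightedHomogeneous_one_two_iff.2 hform).map _).eq_of_aeval_lucasSubst_eq hQw <| by
      rw [aeval_lucasSubst_map, hQe, ← Polynomial.map_cyclotomic n (Int.castRingHom ℝ),
        ← heval]
      rfl
  intro m
  simpa [← hPQ, coeff_map] using hQ m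
end

section
/- The Gamma map is multiplicative: if p(q) and r(q) are palindromic polynomials (of total degrees d and e respectively) with gamma expansions p = Σ γ_j q^j(1+q)^{d-2j} and r = Σ δ_j q^j(1+q)^{e-2j}, then Γ(pr) = Γ(p)Γ(r), where Γ(p) = Σ γ_j s^{d-2j}(-t)^j. -/
/-!
Both sides are products of sums `∑ c_j x^j y^(d-2j)` (with `x = q, y = 1 + q`, resp. `x = -t, y = s`),
and in any commutative semiring the product of two such sums of degrees `d` and `e` is the sum of
degree `d + e` whose coefficients are the Cauchy product of the two coefficient sequences. Since
`q^j (1+q)^(n-2j)` has lowest term `q^j`, gamma expansions are unique, so the gamma coefficients of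
`p r` are that Cauchy product, and its image under `Γ` is `Γ(p) Γ(r)`.
-/

open Finset Polynomial

section Convolution

variable {R : Type*} [CommSemiring R]

lemma sum_range_eq_sum_range_of_eq_zero {f : ℕ → R} {m n : ℕ} (hf : ∀ i, m < i → f i = 0)
    (hmn : m < n) : ∑ i ∈ range (m + 1), f i = ∑ i ∈ range n, f i :=
  sum_subset (range_subset_range.2 hmn) fun i _ hi => hf i (by simpa using hi)

lemma sum_range_mul_sum_range_eq_sum_antidiagonal {a b : ℕ → R} {d e : ℕ}
    (ha : ∀ i, d < i → a i = 0) (hb : ∀ k, e < k → b k = 0) :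
    (∑ i ∈ range (d + 1), a i) * (∑ k ∈ range (e + 1), b k) =
      ∑ j ∈ range (d + e + 1), ∑ p ∈ antidiagonal j, a p.1 * b p.2 := by
  calc (∑ i ∈ range (d + 1), a i) * (∑ k ∈ range (e + 1), b k)
      = ∑ i ∈ range (d + e + 1), ∑ k ∈ range (d + e + 1 - i), a i * b k := by
        rw [sum_range_eq_sum_range_of_eq_zero ha (by omega : d < d + e + 1), sum_mul]
        refine sum_congr rfl fun i _ => ?_
        rcases le_or_gt i d with hi | hi
        · rw [mul_sum]
          exact sum_range_eq_sum_range_of_eq_zero (fun k hk => by rw [hb k hk, mul_zero])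
            (by omega)
        · simp only [ha i hi, zero_mul, sum_const_zero]
    _ = ∑ j ∈ range (d + e + 1), ∑ p ∈ antidiagonal j, a p.1 * b p.2 := by
        simp only [← sum_range_diag_flip, Nat.sum_antidiagonal_eq_sum_range_succ_mk]

def convolve (c c' : ℕ → R) (j : ℕ) : R :=
  ∑ p ∈ antidiagonal j, c p.1 * c' p.2

lemma convolve_eq_zero {c c' : ℕ → R} {d e : ℕ} (hc : ∀ j, d < 2 * j → c j = 0)
    (hc' : ∀ j, e < 2 * j → c' j = 0) {j : ℕ} (hj : d + e < 2 * j) : convolve c c' j = 0 :=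
  sum_eq_zero fun p hp => by
    rw [HasAntidiagonal.mem_antidiagonal] at hp
    rcases (by omega : d < 2 * p.1 ∨ e < 2 * p.2) with h | h
    · rw [hc _ h, zero_mul]
    · rw [hc' _ h, mul_zero]

lemma map_convolve {S : Type*} [CommSemiring S] (f : R →+* S) (c c' : ℕ → R) (j : ℕ) :
    f (convolve c c' j) = convolve (fun i => f (c i)) (fun i => f (c' i)) j := by
  simp only [convolve, map_sum, map_mul]

end Convolution

section GammaSum

variable {A : Type*} [CommSemiring A]

/-- `∑ c_j x^j y^(d-2j)`; with `x = q`, `y = 1 + q` this is a gamma expansion, with `x = -t`,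
`y = s` its image under `Γ`. -/
def gammaSum (d : ℕ) (c : ℕ → A) (x y : A) : A :=
  ∑ j ∈ range (d + 1), c j * x ^ j * y ^ (d - 2 * j)

lemma gammaSum_mul_gammaSum {d e : ℕ} {c c' : ℕ → A} (hc : ∀ j, d < 2 * j → c j = 0)
    (hc' : ∀ j, e < 2 * j → c' j = 0) (x y : A) :
    gammaSum d c x y * gammaSum e c' x y = gammaSum (d + e) (convolve c c') x y := by
  let term (n : ℕ) (c : ℕ → A) (j : ℕ) := c j * x ^ j * y ^ (n - 2 * j)
  have hterm {n : ℕ} {c : ℕ → A} (hc : ∀ j, n < 2 * j → c j = 0) : ∀ j, n < j → term n c j = 0 :=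
    fun j hj => by simp only [term, hc j (by omega), zero_mul]
  rw [gammaSum, gammaSum, sum_range_mul_sum_range_eq_sum_antidiagonal (hterm hc) (hterm hc')]
  refine sum_congr rfl fun j _ => ?_
  rw [convolve, sum_mul, sum_mul]
  refine sum_congr rfl fun p hp => ?_
  rw [HasAntidiagonal.mem_antidiagonal] at hp
  by_cases hd : 2 * p.1 ≤ d
  · by_cases he : 2 * p.2 ≤ e
    · have hexp : d + e - 2 * j = (d - 2 * p.1) + (e - 2 * p.2) := by omega
      rw [hexp, ← hp]
      ring
    · simp only [term, hc' p.2 (by omega), zero_mul, mul_zero]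
  · simp only [term, hc p.1 (by omega), zero_mul]

end GammaSum

lemma coeff_X_pow_mul_one_add_X_pow {R : Type*} [Semiring R] (i m j : ℕ) :
    (X ^ i * (1 + X) ^ m : R[X]).coeff j = if i ≤ j then (m.choose (j - i) : R) else 0 := by
  rw [coeff_X_pow_mul', coeff_one_add_X_pow]

/-- The `j`-th coefficient of `q^i (1+q)^(n-2i)` is `0` for `i > j` and `1` for `i = j`, so the
lowest nonzero gamma coefficient is visible as a coefficient of the polynomial. -/
lemma eq_zero_of_gammaSum_eq_zero {R : Type*} [CommSemiring R] {n : ℕ} {c : ℕ → R}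
    (hc : ∀ j, n < 2 * j → c j = 0) (h : gammaSum n (fun j => C (c j)) X (1 + X) = 0) (j : ℕ) :
    c j = 0 := by
  induction j using Nat.strong_induction_on with
  | _ j ih =>
    by_cases hj : n < 2 * j
    · exact hc j hj
    have hcoeff := congrArg (coeff · j) h
    simp only [gammaSum, finsetSum_coeff, mul_assoc, coeff_C_mul, coeff_X_pow_mul_one_add_X_pow,
      coeff_zero] at hcoeff
    rwa [sum_eq_single_of_mem j (by simp; omega) fun i _ hij => ?_, if_pos le_rfl,
      Nat.sub_self, Nat.choose_zero_right, Nat.cast_one, mul_one] at hcoeff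
    rcases lt_or_gt_of_ne hij with hlt | hgt
    · rw [ih i hlt, zero_mul]
    · rw [if_neg (by omega), mul_zero]

lemma gammaSum_injective {R : Type*} [CommRing R] {n : ℕ} {c c' : ℕ → R}
    (hc : ∀ j, n < 2 * j → c j = 0) (hc' : ∀ j, n < 2 * j → c' j = 0)
    (h : gammaSum n (fun j => C (c j)) X (1 + X) = gammaSum n (fun j => C (c' j)) X (1 + X)) :
    c = c' := by
  refine funext fun j => sub_eq_zero.1 (eq_zero_of_gammaSum_eq_zero (n := n) (c := c - c') ?_ ?_ j)
  · intro j hj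
    simp only [Pi.sub_apply, hc j hj, hc' j hj, sub_zero]
  · simp only [gammaSum, Pi.sub_apply, map_sub, sub_mul, sum_sub_distrib] at h ⊢
    exact sub_eq_zero.2 h

theorem gamma_map_multiplicative (d e : ℕ) (γ δ ε : ℕ → ℂ)
    (hγ : ∀ j, d < 2 * j → γ j = 0) (hδ : ∀ j, e < 2 * j → δ j = 0)
    (hε : ∀ j, d + e < 2 * j → ε j = 0)
    (hprod : (∑ j ∈ Finset.range (d + e + 1),
        Polynomial.C (ε j) * Polynomial.X ^ j * (1 + Polynomial.X) ^ (d + e - 2 * j)) =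
      (∑ j ∈ Finset.range (d + 1),
        Polynomial.C (γ j) * Polynomial.X ^ j * (1 + Polynomial.X) ^ (d - 2 * j)) *
      (∑ j ∈ Finset.range (e + 1),
        Polynomial.C (δ j) * Polynomial.X ^ j * (1 + Polynomial.X) ^ (e - 2 * j))) :
    (∑ j ∈ Finset.range (d + e + 1), MvPolynomial.C (ε j) *
        MvPolynomial.X 0 ^ (d + e - 2 * j) * (-MvPolynomial.X 1) ^ j :
          MvPolynomial (Fin 2) ℂ) =
    (∑ j ∈ Finset.range (d + 1), MvPolynomial.C (γ j) *
        MvPolynomial.X 0 ^ (d - 2 * j) * (-MvPolynomial.X 1) ^ j) *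
    (∑ j ∈ Finset.range (e + 1), MvPolynomial.C (δ j) *
        MvPolynomial.X 0 ^ (e - 2 * j) * (-MvPolynomial.X 1) ^ j) := by
  have hC {S : Type} [CommSemiring S] (f : ℂ →+* S) {n : ℕ} {c : ℕ → ℂ}
      (hc : ∀ j, n < 2 * j → c j = 0) (j : ℕ) (hj : n < 2 * j) : f (c j) = 0 := by
    rw [hc j hj, map_zero]
  have hεγδ : ε = convolve γ δ := by
    refine gammaSum_injective hε (fun j => convolve_eq_zero hγ hδ) ?_
    rw [funext (map_convolve C γ δ), ← gammaSum_mul_gammaSum (hC C hγ) (hC C hδ)]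
    exact hprod
  have hΓ (n : ℕ) (c : ℕ → ℂ) : ∑ j ∈ range (n + 1), MvPolynomial.C (c j) *
      MvPolynomial.X 0 ^ (n - 2 * j) * (-MvPolynomial.X 1) ^ j =
      gammaSum n (fun j => MvPolynomial.C (c j)) (-MvPolynomial.X 1 : MvPolynomial (Fin 2) ℂ)
        (MvPolynomial.X 0) :=
    sum_congr rfl fun _ _ => mul_right_comm _ _ _
  rw [hΓ, hΓ, hΓ, gammaSum_mul_gammaSum (hC MvPolynomial.C hγ) (hC MvPolynomial.C hδ), hεγδ]
  exact congrArg (gammaSum _ · _ _) (funext (map_convolve MvPolynomial.C γ δ))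
end

section
/- For any positive integers n, m, k with k ≤ n, the m-divisible Lucanomial {n:m}!/({k:m}!{n-k:m}!) is a polynomial in s,t with nonnegative integer coefficients, where {n:m}! = {m}{2m}⋯{nm}. -/
open MvPolynomial

noncomputable def lucasN : ℕ → MvPolynomial (Fin 2) ℕ
  | 0 => 0
  | 1 => 1
  | (n+2) => X 0 * lucasN (n+1) + X 1 * lucasN n

lemma lucasN_map (n : ℕ) :
    MvPolynomial.map (Nat.castRingHom ℤ) (lucasN n) = lucas n := by
  induction n using Nat.twoStepInduction with
  | zero => simp [lucasN, lucas]
  | one => simp [lucasN, lucas]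
  | more n ih1 ih2 =>
    simp [lucasN, lucas, map_add, map_mul, ih1, ih2]

lemma lucasN_rec (p : ℕ) :
    lucasN (p + 2) = X 0 * lucasN (p + 1) + X 1 * lucasN p := rfl

lemma lucasN_add (a b : ℕ) :
    lucasN (a + b + 1) =
      lucasN (a + 1) * lucasN (b + 1) + X 1 * lucasN a * lucasN b := by
  induction b using Nat.twoStepInduction generalizing a with
  | zero => simp [lucasN]
  | one =>
    have h2 : lucasN 2 = X 0 := by
      have e : lucasN 2 = X 0 * lucasN 1 + X 1 * lucasN 0 := rfl
      simp [e, lucasN]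
    show lucasN (a + 2) = _
    rw [lucasN_rec a, h2]
    simp [lucasN]
    ring
  | more b ih1 ih2 =>
    rw [show a + (b + 2) + 1 = (a + b + 1) + 2 by ring, lucasN_rec,
      show (a + b + 1) + 1 = a + (b + 1) + 1 by ring, ih2, ih1,
      show (b + 2) + 1 = (b + 1) + 2 by ring, lucasN_rec (b+1),
      show (b + 1) + 1 = b + 2 from rfl, lucasN_rec b]
    ring

lemma keyN (m : ℕ) (hm : 1 ≤ m) :
    ∀ n k : ℕ, k ≤ n → ∃ g : MvPolynomial (Fin 2) ℕ,
      g * (∏ i ∈ Finset.Icc 1 k, lucasN (i * m)) *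
          (∏ i ∈ Finset.Icc 1 (n - k), lucasN (i * m)) =
        ∏ i ∈ Finset.Icc 1 n, lucasN (i * m) := by
  intro n
  induction n with
  | zero =>
    intro k hk
    interval_cases k
    exact ⟨1, by simp⟩
  | succ n ih =>
    intro k hk
    rcases Nat.eq_zero_or_pos k with rfl | hk1
    · exact ⟨1, by simp⟩
    rcases eq_or_lt_of_le hk with rfl | hklt
    · exact ⟨1, by simp⟩
    -- 1 ≤ k ≤ n
    have hkn : k ≤ n := Nat.lt_succ_iff.mp hklt
    obtain ⟨j, rfl⟩ : ∃ j, k = j + 1 := ⟨k - 1, (Nat.succ_pred_eq_of_pos hk1).symm⟩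
    obtain ⟨g1, hg1⟩ := ih (j + 1) hkn
    obtain ⟨g2, hg2⟩ := ih j (le_trans (Nat.le_succ j) hkn)
    -- (n+1-(j+1)) * m = (n - j) * m ≥ 1
    have hnj : n + 1 - (j + 1) = n - j := by omega
    obtain ⟨c, hc⟩ : ∃ c, (n - j) * m = c + 1 := by
      have : 1 ≤ (n - j) * m := Nat.one_le_iff_ne_zero.mpr (by
        have : 1 ≤ n - j := by omega
        positivity)
      exact ⟨(n - j) * m - 1, by omega⟩
    refine ⟨lucasN ((j + 1) * m + 1) * g1 + X 1 * lucasN c * g2, ?_⟩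
    have hsplit : (n + 1) * m = (j + 1) * m + c + 1 := by
      have : (n + 1) * m = (j + 1) * m + (n - j) * m := by
        rw [← Nat.add_mul]; congr 1; omega
      omega
    have htop : ∏ i ∈ Finset.Icc 1 (n + 1), lucasN (i * m) =
        lucasN ((n + 1) * m) * ∏ i ∈ Finset.Icc 1 n, lucasN (i * m) := by
      rw [Finset.prod_Icc_succ_top (by omega)]; ring
    have hPk : ∏ i ∈ Finset.Icc 1 (j + 1), lucasN (i * m) =
        lucasN ((j + 1) * m) * ∏ i ∈ Finset.Icc 1 j, lucasN (i * m) := by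
      rw [Finset.prod_Icc_succ_top (by omega)]; ring
    have hPnk : ∏ i ∈ Finset.Icc 1 (n + 1 - (j + 1)), lucasN (i * m) =
        lucasN ((n - j) * m) * ∏ i ∈ Finset.Icc 1 (n - (j + 1)), lucasN (i * m) := by
      rw [hnj, show n - j = (n - (j + 1)) + 1 by omega,
        Finset.prod_Icc_succ_top (by omega), show n - (j+1) + 1 = n - j by omega]
      ring
    rw [htop, hsplit, lucasN_add, hPnk, hPk, hc]
    have h1 : lucasN ((j+1)*m + 1) * g1 *
        (lucasN ((j+1)*m) * ∏ i ∈ Finset.Icc 1 j, lucasN (i*m)) *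
        (lucasN (c+1) * ∏ i ∈ Finset.Icc 1 (n - (j+1)), lucasN (i*m)) =
        lucasN ((j+1)*m + 1) * lucasN (c+1) *
          (∏ i ∈ Finset.Icc 1 n, lucasN (i*m)) := by
      rw [← hg1, hPk, show n - (j+1) = n - (j+1) from rfl]; ring
    have h2 : X 1 * lucasN c * g2 *
        (lucasN ((j+1)*m) * ∏ i ∈ Finset.Icc 1 j, lucasN (i*m)) *
        (lucasN (c+1) * ∏ i ∈ Finset.Icc 1 (n - (j+1)), lucasN (i*m)) =
        (X 1 : MvPolynomial (Fin 2) ℕ) * lucasN ((j+1)*m) * lucasN c *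
          (∏ i ∈ Finset.Icc 1 n, lucasN (i*m)) := by
      have hPnj : ∏ i ∈ Finset.Icc 1 (n - j), lucasN (i*m) =
          lucasN (c+1) * ∏ i ∈ Finset.Icc 1 (n - (j+1)), lucasN (i*m) := by
        rw [show n - j = (n - (j+1)) + 1 by omega,
          Finset.prod_Icc_succ_top (by omega : 1 ≤ n - (j+1) + 1),
          show n - (j+1) + 1 = n - j by omega, hc]
        ring
      have hg2' : g2 * (∏ i ∈ Finset.Icc 1 j, lucasN (i*m)) *
          (lucasN (c+1) * ∏ i ∈ Finset.Icc 1 (n - (j+1)), lucasN (i*m)) =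
          ∏ i ∈ Finset.Icc 1 n, lucasN (i*m) := by
        rw [← hg2, hPnj]
      calc X 1 * lucasN c * g2 *
          (lucasN ((j+1)*m) * ∏ i ∈ Finset.Icc 1 j, lucasN (i*m)) *
          (lucasN (c+1) * ∏ i ∈ Finset.Icc 1 (n - (j+1)), lucasN (i*m))
          = X 1 * lucasN ((j+1)*m) * lucasN c *
            (g2 * (∏ i ∈ Finset.Icc 1 j, lucasN (i*m)) *
            (lucasN (c+1) * ∏ i ∈ Finset.Icc 1 (n - (j+1)), lucasN (i*m))) := by ring
        _ = _ := by rw [hg2']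
    calc (lucasN ((j+1)*m + 1) * g1 + X 1 * lucasN c * g2) *
        (lucasN ((j+1)*m) * ∏ i ∈ Finset.Icc 1 j, lucasN (i*m)) *
        (lucasN (c+1) * ∏ i ∈ Finset.Icc 1 (n - (j+1)), lucasN (i*m))
        = lucasN ((j+1)*m + 1) * g1 *
            (lucasN ((j+1)*m) * ∏ i ∈ Finset.Icc 1 j, lucasN (i*m)) *
            (lucasN (c+1) * ∏ i ∈ Finset.Icc 1 (n - (j+1)), lucasN (i*m))
          + X 1 * lucasN c * g2 *
            (lucasN ((j+1)*m) * ∏ i ∈ Finset.Icc 1 j, lucasN (i*m)) *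
            (lucasN (c+1) * ∏ i ∈ Finset.Icc 1 (n - (j+1)), lucasN (i*m)) := by ring
      _ = (lucasN ((j+1)*m + 1) * lucasN (c+1) + X 1 * lucasN ((j+1)*m) * lucasN c) *
            (∏ i ∈ Finset.Icc 1 n, lucasN (i*m)) := by rw [h1, h2]; ring

theorem m_divisible_lucanomial_nonneg (n m k : ℕ) (hn : 1 ≤ n) (hm : 1 ≤ m)
    (hk : k ≤ n) :
    ∃ f : MvPolynomial (Fin 2) ℤ,
      (∀ mo : Fin 2 →₀ ℕ, 0 ≤ f.coeff mo) ∧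
      f * (∏ i ∈ Finset.Icc 1 k, lucas (i * m)) *
          (∏ i ∈ Finset.Icc 1 (n - k), lucas (i * m)) =
        ∏ i ∈ Finset.Icc 1 n, lucas (i * m) := by
  obtain ⟨g, hg⟩ := keyN m hm n k hk
  refine ⟨MvPolynomial.map (Nat.castRingHom ℤ) g, ?_, ?_⟩
  · intro mo
    rw [MvPolynomial.coeff_map]
    exact Int.ofNat_nonneg _
  · have := congrArg (MvPolynomial.map (Nat.castRingHom ℤ)) hg
    simpa [map_mul, map_prod, lucasN_map] using this
end

section
/- For n ≥ 3, the Lucas atom P_n(1,1) is even if and only if n = 3·2^m for some m ≥ 0. Equivalently, using Fibonacci numbers F_n = {n}_{1,1} and the factorization F_n = ∏_{d|n} P_d(1,1): the Fibonacci atoms P_n(1,1) are even exactly for n ∈ {3, 6, 12, 24, ...}. -/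
/-!
Let ω be a primitive cube root of unity in a field of characteristic 2. There `1 + ω = ω²` and
`-ω = ω⁴`, so the weighted homogeneity of `P` (weights 1 and 2, degree `φ n`) gives
`P(1 + ω, -ω) = ω^(2 φ n) P(1, 1)`: thus `P(1, 1)` is even iff `ω` is a root of `Φₙ` mod 2.
Writing `n = 2ᵏ m` with `m` odd, the roots of `Φₙ` in characteristic 2 are the primitive `m`-th
roots of unity, so this happens iff `m = 3`.
-/

open Polynomial

theorem MvPolynomial.IsWeightedHomogeneous.aeval_pow_mul {R S σ : Type*} [CommSemiring R]
    [CommSemiring S] [Algebra R S] {w : σ → ℕ} {P : MvPolynomial σ R} {N : ℕ}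
    (hP : IsWeightedHomogeneous w P N) (c : S) (x : σ → S) :
    aeval (fun i => c ^ w i * x i) P = c ^ N * aeval x P := by
  simp only [aeval_def, eval₂_eq, Finset.mul_sum]
  refine Finset.sum_congr rfl fun d hd => ?_
  have hweight : ∑ i ∈ d.support, d i * w i = N := by
    rw [← hP (mem_support_iff.mp hd), Finsupp.weight_apply, Finsupp.sum]; rfl
  simp only [mul_pow, Finset.prod_mul_distrib, ← pow_mul, Finset.prod_pow_eq_pow_sum,
    mul_comm (w _), hweight]
  ring

theorem neZero_natCast_of_odd {R : Type*} [AddMonoidWithOne R] [CharP R 2] {m : ℕ}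
    (hm : Odd m) : NeZero (m : R) :=
  ⟨by rw [Ne, CharP.cast_eq_zero_iff R 2]; exact hm.not_two_dvd_nat⟩

theorem exists_isPrimitiveRoot_three_algebraicClosure_zmod_two :
    ∃ ω : AlgebraicClosure (ZMod 2), IsPrimitiveRoot ω 3 :=
  have := neZero_natCast_of_odd (R := AlgebraicClosure (ZMod 2)) (by decide : Odd 3)
  HasEnoughRootsOfUnity.exists_primitiveRoot _ 3

section CharTwo

variable {R : Type*} [CommRing R] [CharP R 2] {ω : R}

theorem IsPrimitiveRoot.neg_eq_sq_sq_of_charTwo (hω : IsPrimitiveRoot ω 3) :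
    -ω = (ω ^ 2) ^ 2 := by
  linear_combination -ω * hω.pow_eq_one - CharTwo.two_eq_zero (R := R) * ω

variable [IsDomain R]

theorem IsPrimitiveRoot.one_add_eq_sq_of_charTwo (hω : IsPrimitiveRoot ω 3) :
    1 + ω = ω ^ 2 := by
  have hsum := hω.geom_sum_eq_zero (by norm_num)
  simp only [Finset.sum_range_succ, Finset.sum_range_zero] at hsum
  linear_combination hsum - CharTwo.two_eq_zero (R := R) * ω ^ 2

theorem isRoot_cyclotomic_iff_eq_three_mul_two_pow (hω : IsPrimitiveRoot ω 3) {n : ℕ} :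
    (cyclotomic n R).IsRoot ω ↔ ∃ k, n = 3 * 2 ^ k := by
  have : Fact (Nat.Prime 2) := ⟨Nat.prime_two⟩
  constructor
  · intro hroot
    have hn : n ≠ 0 := by rintro rfl; simp at hroot
    obtain ⟨k, m, hm, rfl⟩ := Nat.exists_eq_two_pow_mul_odd hn
    have := neZero_natCast_of_odd (R := R) hm
    rw [isRoot_cyclotomic_prime_pow_mul_iff_of_charP] at hroot
    exact ⟨k, by rw [hroot.unique hω, mul_comm]⟩
  · rintro ⟨k, rfl⟩
    have := neZero_natCast_of_odd (R := R) (by decide : Odd 3)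
    rwa [mul_comm, isRoot_cyclotomic_prime_pow_mul_iff_of_charP]

theorem two_dvd_eval_one_one_iff_aeval_eq_zero (hω : IsPrimitiveRoot ω 3)
    {P : MvPolynomial (Fin 2) ℤ} {N : ℕ} (hP : P.IsWeightedHomogeneous ![1, 2] N) :
    2 ∣ MvPolynomial.eval ![1, 1] P ↔
      aeval ω (MvPolynomial.aeval ![1 + X, -X] P : ℤ[X]) = 0 := by
  have hpoint : (fun i => aeval ω (![1 + X, -X] i : ℤ[X])) =
      fun i => (ω ^ 2) ^ (![1, 2] i : ℕ) * algebraMap ℤ R (![1, 1] i) := by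
    ext i; fin_cases i
    · simp [hω.one_add_eq_sq_of_charTwo]
    · simp [hω.neg_eq_sq_sq_of_charTwo]
  rw [MvPolynomial.comp_aeval_apply, hpoint, hP.aeval_pow_mul,
    ← Function.comp_def (algebraMap ℤ R), MvPolynomial.aeval_algebraMap_apply, eq_intCast,
    mul_eq_zero_iff_left (pow_ne_zero _ (pow_ne_zero _ (hω.ne_zero (by norm_num)))),
    CharP.intCast_eq_zero_iff R 2, Nat.cast_ofNat]
  rfl

end CharTwo

theorem lucas_atom_one_one_even_iff_general (n : ℕ)
    (P : MvPolynomial (Fin 2) ℤ)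
    (hform : ∀ m : Fin 2 →₀ ℕ, P.coeff m ≠ 0 → m 0 + 2 * m 1 = Nat.totient n)
    (heval : MvPolynomial.aeval ![1 + Polynomial.X, -Polynomial.X] P =
      Polynomial.cyclotomic n ℤ) :
    2 ∣ MvPolynomial.eval ![1, 1] P ↔ ∃ m : ℕ, n = 3 * 2 ^ m := by
  obtain ⟨ω, hω⟩ := exists_isPrimitiveRoot_three_algebraicClosure_zmod_two
  have hP : P.IsWeightedHomogeneous ![1, 2] n.totient := fun d hd => by
    simpa [Finsupp.weight_eq_sum, Fin.sum_univ_two, mul_comm] using hform d hd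
  rw [two_dvd_eval_one_one_iff_aeval_eq_zero hω hP, heval, aeval_def, eval₂_eq_eval_map,
    map_cyclotomic, ← IsRoot.def, isRoot_cyclotomic_iff_eq_three_mul_two_pow hω]

theorem lucas_atom_one_one_even_iff (n : ℕ) (hn : 3 ≤ n)
    (P : MvPolynomial (Fin 2) ℤ)
    (hform : ∀ m : Fin 2 →₀ ℕ, P.coeff m ≠ 0 → m 0 + 2 * m 1 = Nat.totient n)
    (heval : MvPolynomial.aeval ![1 + Polynomial.X, -Polynomial.X] P =
      Polynomial.cyclotomic n ℤ) :
    2 ∣ MvPolynomial.eval ![1, 1] P ↔ ∃ m : ℕ, n = 3 * 2 ^ m :=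
  lucas_atom_one_one_even_iff_general n P hform heval
end

section
/- Let b be an integer and n ≥ 3. The 2-adic valuation of Φ_n(b) equals 1 if n = 2^m for some m ≥ 2 and b is odd, and equals 0 otherwise. -/
/-!
For `b` even, `Φ_n(b) ≡ Φ_n(0) = ±1 (mod 2)`; for `b` odd, `Φ_n(b) ≡ Φ_n(1) (mod 2)`, and `Φ_n(1)`
is `p` when `n` is a power of the prime `p` and `1` when `n` is not a prime power, so it is odd
unless `n` is a power of `2`. Finally `Φ_{2^(k+1)}(b) = b^(2^k) + 1`, which for odd `b` and `k ≥ 1`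
is an odd square plus one, hence `≡ 2 (mod 4)`.
-/

open Polynomial

theorem padicValInt_eq_one_of_dvd_of_not_dvd_sq {p : ℕ} [Fact p.Prime] {a : ℤ}
    (h₁ : (p : ℤ) ∣ a) (h₂ : ¬ (p : ℤ) ^ 2 ∣ a) : padicValInt p a = 1 := by
  have ha : a ≠ 0 := by rintro rfl; exact h₂ (dvd_zero _)
  have hle : 1 ≤ padicValInt p a :=
    ((padicValInt_dvd_iff 1 a).mp (by simpa using h₁)).resolve_left ha
  have hlt : padicValInt p a < 2 := by
    by_contra! h
    exact h₂ ((padicValInt_dvd_iff 2 a).mpr (Or.inr h))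
  omega

theorem padicValInt_two_sq_add_one_of_odd {c : ℤ} (hc : Odd c) : padicValInt 2 (c ^ 2 + 1) = 1 := by
  have h := Int.sq_mod_four_eq_one_of_odd hc
  exact padicValInt_eq_one_of_dvd_of_not_dvd_sq (by push_cast; omega) (by push_cast; omega)

namespace Polynomial

theorem odd_eval_iff_of_two_dvd_sub (p : ℤ[X]) {a b : ℤ} (h : 2 ∣ a - b) :
    Odd (p.eval a) ↔ Odd (p.eval b) := by
  have heven : Even (p.eval a - p.eval b) :=
    even_iff_two_dvd.mpr (h.trans (sub_dvd_eval_sub a b p))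
  rw [← Int.not_even_iff_odd, ← Int.not_even_iff_odd, Int.even_sub.mp heven]

theorem odd_cyclotomic_eval_zero (n : ℕ) : Odd ((cyclotomic n ℤ).eval 0) := by
  rcases lt_trichotomy n 1 with hn | rfl | hn
  · simp [Nat.lt_one_iff.mp hn]
  · simp
  · rw [← coeff_zero_eq_eval_zero, cyclotomic_coeff_zero ℤ hn]
    exact odd_one

theorem odd_cyclotomic_eval_one {n : ℕ} (hn : ∀ k, n ≠ 2 ^ k) :
    Odd ((cyclotomic n ℤ).eval 1) := by
  by_cases hpow : ∃ p k : ℕ, p.Prime ∧ p ^ k = n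
  · obtain ⟨p, k, hp, rfl⟩ := hpow
    have : Fact p.Prime := ⟨hp⟩
    obtain ⟨k, rfl⟩ : ∃ j, k = j + 1 := Nat.exists_eq_add_one.mpr <| Nat.pos_of_ne_zero <| by
      rintro rfl; exact hn 0 rfl
    have hp2 : p ≠ 2 := by rintro rfl; exact hn _ rfl
    rw [eval_one_cyclotomic_prime_pow]
    exact_mod_cast hp.odd_of_ne_two hp2
  · rw [eval_one_cyclotomic_not_prime_pow fun hp k hk => hpow ⟨_, k, hp, hk⟩]
    exact odd_one

theorem odd_cyclotomic_eval_of_even (n : ℕ) {b : ℤ} (hb : Even b) :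
    Odd ((cyclotomic n ℤ).eval b) :=
  (odd_eval_iff_of_two_dvd_sub _ (by simpa using hb.two_dvd)).mpr (odd_cyclotomic_eval_zero n)

theorem odd_cyclotomic_eval_of_odd {n : ℕ} (hn : ∀ k, n ≠ 2 ^ k) {b : ℤ} (hb : Odd b) :
    Odd ((cyclotomic n ℤ).eval b) :=
  (odd_eval_iff_of_two_dvd_sub _ (even_iff_two_dvd.mp (hb.sub_odd odd_one))).mpr
    (odd_cyclotomic_eval_one hn)

theorem eval_cyclotomic_two_pow_succ {R : Type*} [CommRing R] (k : ℕ) (x : R) :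
    (cyclotomic (2 ^ (k + 1)) R).eval x = x ^ 2 ^ k + 1 := by
  simp [cyclotomic_prime_pow_eq_geom_sum Nat.prime_two, Finset.sum_range_succ, add_comm]

end Polynomial

theorem cyclotomic_two_adic_valuation (b : ℤ) (n : ℕ) (hn : 3 ≤ n) :
    (((∃ m : ℕ, 2 ≤ m ∧ n = 2 ^ m) ∧ Odd b) →
      padicValInt 2 ((Polynomial.cyclotomic n ℤ).eval b) = 1) ∧
    (¬ ((∃ m : ℕ, 2 ≤ m ∧ n = 2 ^ m) ∧ Odd b) →
      padicValInt 2 ((Polynomial.cyclotomic n ℤ).eval b) = 0) := by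
  constructor
  · rintro ⟨⟨m, hm, rfl⟩, hb⟩
    obtain ⟨k, rfl⟩ : ∃ k, m = k + 1 + 1 := ⟨m - 2, by omega⟩
    rw [eval_cyclotomic_two_pow_succ, pow_succ, pow_mul]
    exact padicValInt_two_sq_add_one_of_odd hb.pow
  · intro h
    apply padicValInt.eq_zero_of_not_dvd
    rw [Nat.cast_ofNat, ← even_iff_two_dvd, Int.not_even_iff_odd]
    rcases Int.even_or_odd b with hb | hb
    · exact odd_cyclotomic_eval_of_even n hb
    · refine odd_cyclotomic_eval_of_odd (fun k hk => h ⟨⟨k, ?_, hk⟩, hb⟩) hb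
      have : 2 ^ 1 < 2 ^ k := by omega
      exact (Nat.pow_lt_pow_iff_right (by norm_num)).mp this
end
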